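/- arXiv:1704.00899 — 2 statements merged into one kernel-verified Lean document; each statement's English description precedes it below -/
import Mathlib

section
/- Let G = (A ∪ P, E) be a bipartite graph, M a maximum matching in G, and let H be obtained from G by adding a new vertex a to the A-side together with edges from a to a set N ⊆ P of neighbors. If every vertex of N is odd with respect to M in G, then M is a maximum matching of H, every vertex of G has the same label (even, odd, or unreachable) with respect to M in H as it has in G, and the new vertex a is even with respect to M in H. -/
open SimpleGraph

variable {V : Type*}

/-- `M` is a matching in the graph `G`: a set of edges of `G` no two of which
share a vertex. -/
def IsMatchingIn (G : SimpleGraph V) (M : Set (Sym2 V)) : Prop :=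
  M ⊆ G.edgeSet ∧ ∀ e ∈ M, ∀ f ∈ M, e ≠ f → ∀ v : V, v ∈ e → v ∉ f

/-- A vertex `v` is matched (covered) by the matching `M`. -/
def IsMatchedBy (M : Set (Sym2 V)) (v : V) : Prop :=
  ∃ e ∈ M, v ∈ e

/-- The list of edges of a path given as a list of vertices. -/
def pathEdges (p : List V) : List (Sym2 V) :=
  (p.zip p.tail).map fun q => s(q.1, q.2)

/-- `p` is an alternating path from `u` to `v` in `G` with respect to the matching `M`:
its consecutive vertices are adjacent in `G`, it repeats no vertex, and its edges
alternate between edges in `M` and edges not in `M`. -/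
def IsAltPath (G : SimpleGraph V) (M : Set (Sym2 V)) (u v : V) (p : List V) : Prop :=
  p.Chain' G.Adj ∧ p.Nodup ∧
    (pathEdges p).Chain' (fun e f => (e ∈ M ↔ f ∉ M)) ∧
    p.head? = some u ∧ p.getLast? = some v

/-- `v` is even with respect to `M`: there is an even-length alternating path from
an `M`-unmatched vertex to `v`. -/
def EvenVtx (G : SimpleGraph V) (M : Set (Sym2 V)) (v : V) : Prop :=
  ∃ u p, ¬ IsMatchedBy M u ∧ IsAltPath G M u v p ∧ Even (pathEdges p).length

/-- `v` is odd with respect to `M`: there is an odd-length alternating path from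
an `M`-unmatched vertex to `v`. -/
def OddVtx (G : SimpleGraph V) (M : Set (Sym2 V)) (v : V) : Prop :=
  ∃ u p, ¬ IsMatchedBy M u ∧ IsAltPath G M u v p ∧ Odd (pathEdges p).length

/-- `v` is unreachable with respect to `M`: there is no alternating path from any
`M`-unmatched vertex to `v`. -/
def UnreachableVtx (G : SimpleGraph V) (M : Set (Sym2 V)) (v : V) : Prop :=
  ¬ ∃ u p, ¬ IsMatchedBy M u ∧ IsAltPath G M u v p

/-- `M` is a maximum (cardinality) matching in `G`. -/
def IsMaxMatching (G : SimpleGraph V) (M : Set (Sym2 V)) : Prop :=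
  IsMatchingIn G M ∧ ∀ N, IsMatchingIn G N → N.ncard ≤ M.ncard

/-- `G` is bipartite with the two sides given by `side`. -/
def IsBipartiteWith (G : SimpleGraph V) (side : V → Bool) : Prop :=
  ∀ u v, G.Adj u v → side u ≠ side v

/-!
Even and odd vertices are those reached from an unmatched vertex of their own, respectively the
opposite, side by an alternating walk; in a bipartite graph alternation is a condition on single
steps (`AltStep`), so such walks may be concatenated and shortened freely. An alternating walk of
`H` meets the unmatched vertex `a` only at its ends, and when it starts at `a` its second vertex
is odd in `G`, so it can be rerouted through `G`: no label changes. For maximality, the odd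
vertices together with the unreachable vertices of one side form König's vertex cover of `G`,
which also covers the new edges since the neighbours of `a` are odd; as `M` is maximum in `G`, no
alternating path joins unmatched vertices on opposite sides, which bounds the size of the cover
by `|M|`.
-/

open Relation

theorem List.IsChain.reflTransGen {α : Type*} {r : α → α → Prop} {l : List α} {a b : α}
    (hl : l.IsChain r) (ha : l.head? = some a) (hb : l.getLast? = some b) :
    ReflTransGen r a b := by
  obtain ⟨t, rfl⟩ := List.head?_eq_some_iff.mp ha
  exact List.relationReflTransGen_of_exists_isChain_cons t hl
    (by simpa [List.getLast?_eq_some_getLast] using hb)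

theorem SimpleGraph.Walk.isChain_support_of_forall_mem_darts {G : SimpleGraph V}
    {r : V → V → Prop} : ∀ {u v : V} (w : G.Walk u v), (∀ d ∈ w.darts, r d.fst d.snd) →
    w.support.IsChain r
  | _, _, .nil, _ => List.isChain_singleton _
  | _, _, .cons h p, hr => by
    rw [support_cons, ← p.cons_tail_support, List.isChain_cons_cons, p.cons_tail_support]
    exact ⟨hr ⟨(_, _), h⟩ (by simp),
      p.isChain_support_of_forall_mem_darts fun d hd => hr d (by simp [hd])⟩

theorem List.exists_nodup_isChain_of_reflTransGen {α : Type*} {r : α → α → Prop} {a b : α}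
    (h : ReflTransGen r a b) :
    ∃ l : List α, l.Nodup ∧ l.IsChain r ∧ l.head? = some a ∧ l.getLast? = some b := by
  classical
  obtain ⟨w, hw⟩ : ∃ w : (SimpleGraph.fromRel r).Walk a b, ∀ d ∈ w.darts, r d.fst d.snd := by
    induction h with
    | refl => exact ⟨.nil, by simp⟩
    | @tail c d _ hcd ih =>
      obtain ⟨w, hw⟩ := ih
      by_cases hcd' : c = d
      · exact hcd' ▸ ⟨w, hw⟩
      · have hadj : (SimpleGraph.fromRel r).Adj c d := ⟨hcd', Or.inl hcd⟩
        refine ⟨w.concat hadj, fun e he => ?_⟩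
        simp only [SimpleGraph.Walk.darts_concat, List.concat_eq_append, List.mem_append,
          List.mem_singleton] at he
        rcases he with he | rfl
        exacts [hw e he, hcd]
  refine ⟨w.bypass.support, w.bypass_isPath.support_nodup,
    w.bypass.isChain_support_of_forall_mem_darts fun d hd =>
      hw d (w.darts_bypass_subset_darts hd),
    by rw [← SimpleGraph.Walk.cons_tail_support]; rfl, ?_⟩
  rw [List.getLast?_eq_some_getLast (SimpleGraph.Walk.support_ne_nil _),
    SimpleGraph.Walk.getLast_support]

theorem Set.ncard_le_ncard_of_rel {α β : Type*} {s : Set α} {t : Set β} (ht : t.Finite)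
    (r : α → β → Prop) (hs : ∀ a ∈ s, ∃ b ∈ t, r a b)
    (hr : ∀ a₁ ∈ s, ∀ a₂ ∈ s, ∀ b ∈ t, r a₁ b → r a₂ b → a₁ = a₂) : s.ncard ≤ t.ncard := by
  choose f hft hf using hs
  have := ht.to_subtype
  rw [← Nat.card_coe_set_eq, ← Nat.card_coe_set_eq]
  refine Nat.card_le_card_of_injective (fun a : s => (⟨f a a.2, hft a a.2⟩ : t))
    fun a₁ a₂ h => Subtype.ext (hr a₁ a₁.2 a₂ a₂.2 _ (hft a₁ a₁.2) (hf a₁ a₁.2) ?_)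
  rw [Subtype.mk.injEq] at h
  exact h ▸ hf a₂ a₂.2

section Matchings

variable {G H : SimpleGraph V} {M : Set (Sym2 V)}

theorem isMatchingIn_iff :
    IsMatchingIn G M ↔ M ⊆ G.edgeSet ∧ ∀ e ∈ M, ∀ f ∈ M, ∀ v ∈ e, v ∈ f → e = f :=
  and_congr_right fun _ => forall₂_congr fun _ _ => forall₂_congr fun _ _ =>
    ⟨fun h v hve hvf => by_contra fun hne => h hne v hve hvf,
      fun h hne v hve hvf => hne (h v hve hvf)⟩

theorem IsMatchingIn.eq_of_mem (hM : IsMatchingIn G M) {e f : Sym2 V} {v : V} (he : e ∈ M)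
    (hf : f ∈ M) (hve : v ∈ e) (hvf : v ∈ f) : e = f :=
  (isMatchingIn_iff.mp hM).2 e he f hf v hve hvf

theorem IsMatchingIn.mono (hGH : G ≤ H) (hM : IsMatchingIn G M) : IsMatchingIn H M :=
  ⟨hM.1.trans (SimpleGraph.edgeSet_mono hGH), hM.2⟩

theorem IsMatchingIn.ncard_le_of_isVertexCover [Finite V] {C : Set V} (hM : IsMatchingIn G M)
    (hC : G.IsVertexCover C) : M.ncard ≤ C.ncard := by
  refine Set.ncard_le_ncard_of_rel (Set.toFinite C) (fun e v => v ∈ e) (fun e he => ?_)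
    fun _ he _ hf _ _ hve hvf => hM.eq_of_mem he hf hve hvf
  induction e using Sym2.ind with
  | _ x y =>
    rcases hC (hM.1 he) with hx | hy
    exacts [⟨x, hx, Sym2.mem_mk_left x y⟩, ⟨y, hy, Sym2.mem_mk_right x y⟩]

theorem IsMatchingIn.insert_edge [Finite V] (hM : IsMatchingIn G M) {x y : V} (hxy : G.Adj x y)
    (hx : ¬ IsMatchedBy M x) (hy : ¬ IsMatchedBy M y) :
    IsMatchingIn G (insert s(x, y) M) ∧ (insert s(x, y) M).ncard = M.ncard + 1 := by
  have hfree : ∀ f ∈ M, ∀ v ∈ s(x, y), v ∉ f := by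
    rintro f hf v hv hvf
    rcases Sym2.mem_iff.mp hv with rfl | rfl
    exacts [hx ⟨f, hf, hvf⟩, hy ⟨f, hf, hvf⟩]
  refine ⟨isMatchingIn_iff.mpr ⟨Set.insert_subset hxy hM.1, ?_⟩,
    Set.ncard_insert_of_notMem fun h =>
      hfree _ h x (Sym2.mem_mk_left x y) (Sym2.mem_mk_left x y)⟩
  rintro e (rfl | he) f (rfl | hf) v hve hvf
  exacts [rfl, (hfree f hf v hve hvf).elim, (hfree e he v hvf hve).elim,
    hM.eq_of_mem he hf hve hvf]

theorem IsMatchingIn.switch [Finite V] (hM : IsMatchingIn G M) {u x y : V} (hux : G.Adj u x)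
    (hu : ¬ IsMatchedBy M u) (hxy : s(x, y) ∈ M) :
    IsMatchingIn G (insert s(u, x) (M \ {s(x, y)})) ∧
      (insert s(u, x) (M \ {s(x, y)})).ncard = M.ncard := by
  have hfree : ∀ f ∈ M \ {s(x, y)}, ∀ v ∈ s(u, x), v ∉ f := by
    rintro f ⟨hf, hfxy⟩ v hv hvf
    rcases Sym2.mem_iff.mp hv with rfl | rfl
    exacts [hu ⟨f, hf, hvf⟩, hfxy (hM.eq_of_mem hf hxy hvf (Sym2.mem_mk_left v y))]
  refine ⟨isMatchingIn_iff.mpr ⟨Set.insert_subset hux (Set.sdiff_subset.trans hM.1), ?_⟩, ?_⟩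
  · rintro e (rfl | he) f (rfl | hf) v hve hvf
    exacts [rfl, (hfree f hf v hve hvf).elim, (hfree e he v hvf hve).elim,
      hM.eq_of_mem he.1 hf.1 hve hvf]
  · rw [Set.ncard_insert_of_notMem fun h => hfree _ h u (Sym2.mem_mk_left u x)
      (Sym2.mem_mk_left u x), Set.ncard_sdiff_singleton_add_one hxy]

theorem IsMatchingIn.isMatchedBy_switch (hM : IsMatchingIn G M) {u x y w : V} (hxy : s(x, y) ∈ M)
    (hw : IsMatchedBy (insert s(u, x) (M \ {s(x, y)})) w) :
    w = u ∨ w = x ∨ (w ≠ y ∧ IsMatchedBy M w) := by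
  obtain ⟨e, rfl | ⟨he, hexy⟩, hwe⟩ := hw
  · rcases Sym2.mem_iff.mp hwe with rfl | rfl <;> simp
  · refine .inr (.inr ⟨?_, e, he, hwe⟩)
    rintro rfl
    exact hexy (hM.eq_of_mem he hxy hwe (Sym2.mem_mk_right x w))

end Matchings

/-- A step of an `M`-alternating walk that starts at an unmatched vertex on side `c` of a
bipartite graph: such a walk leaves side `c` along non-matching edges and the other side along
matching edges. -/
def AltStep (G : SimpleGraph V) (M : Set (Sym2 V)) (side : V → Bool) (c : Bool) (x y : V) :
    Prop :=
  G.Adj x y ∧ (s(x, y) ∈ M ↔ side x ≠ c)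

def AltReach (G : SimpleGraph V) (M : Set (Sym2 V)) (side : V → Bool) (c : Bool) (v : V) :
    Prop :=
  ∃ u, ¬ IsMatchedBy M u ∧ side u = c ∧ ReflTransGen (AltStep G M side c) u v

section AltPaths

variable {G : SimpleGraph V} {M : Set (Sym2 V)} {side : V → Bool} {c : Bool} {u v : V}

theorem pathEdges_cons_cons (x y : V) (t : List V) :
    pathEdges (x :: y :: t) = s(x, y) :: pathEdges (y :: t) :=
  rfl

theorem IsBipartiteWith.even_length_pathEdges_iff (hbip : IsBipartiteWith G side) :
    ∀ {u v : V} {t : List V}, (u :: t).IsChain G.Adj → (u :: t).getLast? = some v →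
      (Even (pathEdges (u :: t)).length ↔ side u = side v)
  | u, v, [], _, hv => by
    obtain rfl : u = v := by simpa using hv
    simp [pathEdges]
  | u, v, x :: t, hch, hv => by
    rw [List.isChain_cons_cons] at hch
    rw [pathEdges_cons_cons, List.length_cons, Nat.even_add_one,
      hbip.even_length_pathEdges_iff hch.2 (by simpa using hv)]
    have := hbip u x hch.1
    revert this
    cases side u <;> cases side x <;> cases side v <;> simp

theorem IsBipartiteWith.isChain_altStep (hbip : IsBipartiteWith G side) :
    ∀ {x : V} {t : List V}, (x :: t).IsChain G.Adj →
      (pathEdges (x :: t)).IsChain (fun e f => (e ∈ M ↔ f ∉ M)) →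
      (∀ y ∈ t.head?, (s(x, y) ∈ M ↔ side x ≠ c)) → (x :: t).IsChain (AltStep G M side c)
  | _, [], _, _, _ => List.isChain_singleton _
  | x, y :: t, hadj, halt, hxy => by
    rw [List.isChain_cons_cons] at hadj ⊢
    rw [pathEdges_cons_cons] at halt
    refine ⟨⟨hadj.1, hxy y rfl⟩, hbip.isChain_altStep hadj.2 halt.tail fun z hz => ?_⟩
    obtain ⟨t, rfl⟩ := List.head?_eq_some_iff.mp hz
    rw [pathEdges_cons_cons, List.isChain_cons_cons] at halt
    rw [← not_iff_not, not_not, ← halt.1, hxy y rfl]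
    have := hbip x y hadj.1
    revert this
    cases side x <;> cases side y <;> cases c <;> simp

theorem IsBipartiteWith.isChain_pathEdges (hbip : IsBipartiteWith G side) :
    ∀ {l : List V}, l.IsChain (AltStep G M side c) →
      (pathEdges l).IsChain (fun e f => (e ∈ M ↔ f ∉ M))
  | [], _ | [_], _ | [_, _], _ => by simp [pathEdges]
  | x :: y :: z :: t, h => by
    rw [pathEdges_cons_cons, pathEdges_cons_cons, List.isChain_cons_cons,
      ← pathEdges_cons_cons]
    obtain ⟨⟨hxy, hxyM⟩, hyzt⟩ := List.isChain_cons_cons.mp h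
    refine ⟨?_, hbip.isChain_pathEdges hyzt⟩
    rw [hxyM, (List.isChain_cons_cons.mp hyzt).1.2]
    have := hbip x y hxy
    revert this
    cases side x <;> cases side y <;> cases c <;> simp

theorem IsBipartiteWith.isAltPath_iff (hbip : IsBipartiteWith G side) {p : List V}
    (hu : ¬ IsMatchedBy M u) :
    IsAltPath G M u v p ↔ p.Nodup ∧ p.IsChain (AltStep G M side (side u)) ∧
      p.head? = some u ∧ p.getLast? = some v := by
  constructor
  · rintro ⟨hadj, hnd, halt, hpu, hpv⟩
    obtain ⟨t, rfl⟩ := List.head?_eq_some_iff.mp hpu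
    refine ⟨hnd, hbip.isChain_altStep hadj halt fun y _ => ?_, hpu, hpv⟩
    simpa using fun h => hu ⟨_, h, Sym2.mem_mk_left u y⟩
  · rintro ⟨hnd, hch, hpu, hpv⟩
    exact ⟨hch.imp fun _ _ h => h.1, hnd, hbip.isChain_pathEdges hch, hpu, hpv⟩

theorem IsBipartiteWith.even_length_iff_of_isAltPath (hbip : IsBipartiteWith G side)
    {p : List V} (hp : IsAltPath G M u v p) : Even (pathEdges p).length ↔ side u = side v := by
  obtain ⟨hadj, -, -, hpu, hpv⟩ := hp
  obtain ⟨t, rfl⟩ := List.head?_eq_some_iff.mp hpu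
  exact hbip.even_length_pathEdges_iff hadj hpv

theorem IsBipartiteWith.exists_isAltPath_iff (hbip : IsBipartiteWith G side) :
    (∃ u p, ¬ IsMatchedBy M u ∧ side u = c ∧ IsAltPath G M u v p) ↔ AltReach G M side c v := by
  constructor
  · rintro ⟨u, p, hu, rfl, hp⟩
    obtain ⟨-, hch, hpu, hpv⟩ := (hbip.isAltPath_iff hu).mp hp
    exact ⟨u, hu, rfl, hch.reflTransGen hpu hpv⟩
  · rintro ⟨u, hu, rfl, h⟩
    obtain ⟨p, hp⟩ := List.exists_nodup_isChain_of_reflTransGen h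
    exact ⟨u, p, hu, rfl, (hbip.isAltPath_iff hu).mpr hp⟩

theorem IsBipartiteWith.evenVtx_iff (hbip : IsBipartiteWith G side) :
    EvenVtx G M v ↔ AltReach G M side (side v) v := by
  rw [← hbip.exists_isAltPath_iff]
  constructor
  · rintro ⟨u, p, hu, hp, he⟩
    exact ⟨u, p, hu, (hbip.even_length_iff_of_isAltPath hp).mp he, hp⟩
  · rintro ⟨u, p, hu, hs, hp⟩
    exact ⟨u, p, hu, hp, (hbip.even_length_iff_of_isAltPath hp).mpr hs⟩

theorem IsBipartiteWith.oddVtx_iff (hbip : IsBipartiteWith G side) :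
    OddVtx G M v ↔ AltReach G M side (!side v) v := by
  rw [← hbip.exists_isAltPath_iff]
  constructor
  · rintro ⟨u, p, hu, hp, ho⟩
    refine ⟨u, p, hu, Bool.eq_not.mpr fun hs => ?_, hp⟩
    exact Nat.not_even_iff_odd.mpr ho ((hbip.even_length_iff_of_isAltPath hp).mpr hs)
  · rintro ⟨u, p, hu, hs, hp⟩
    refine ⟨u, p, hu, hp, Nat.not_even_iff_odd.mp fun he => ?_⟩
    exact Bool.eq_not.mp hs ((hbip.even_length_iff_of_isAltPath hp).mp he)

theorem IsBipartiteWith.unreachableVtx_iff (hbip : IsBipartiteWith G side) :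
    UnreachableVtx G M v ↔ ∀ c, ¬ AltReach G M side c v := by
  simp only [UnreachableVtx, ← hbip.exists_isAltPath_iff]
  constructor
  · rintro h c ⟨u, p, hu, -, hp⟩
    exact h ⟨u, p, hu, hp⟩
  · rintro h ⟨u, p, hu, hp⟩
    exact h _ ⟨u, p, hu, rfl, hp⟩

end AltPaths

section AltReach

variable {G H : SimpleGraph V} {M : Set (Sym2 V)} {side : V → Bool} {c : Bool} {u v x y : V}

theorem altReach_self (hu : ¬ IsMatchedBy M u) : AltReach G M side (side u) u :=
  ⟨u, hu, rfl, .refl⟩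

theorem AltReach.tail (h : AltReach G M side c x) (hxy : AltStep G M side c x y) :
    AltReach G M side c y :=
  let ⟨u, hu, hc, h⟩ := h
  ⟨u, hu, hc, h.tail hxy⟩

theorem AltReach.mono (hGH : G ≤ H) (h : AltReach G M side c v) : AltReach H M side c v :=
  let ⟨u, hu, hc, h⟩ := h
  ⟨u, hu, hc, ReflTransGen.mono (fun _ _ hs => ⟨hGH hs.1, hs.2⟩) _ _ h⟩

theorem AltReach.eq_side_of_isolated (hv : ∀ w, ¬ G.Adj w v) (h : AltReach G M side c v) :
    c = side v := by
  obtain ⟨u, -, rfl, h⟩ := h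
  rcases h.cases_tail with rfl | ⟨w, -, hw⟩
  exacts [rfl, (hv w hw.1).elim]

/-- If `xy ∈ M`, then `y` is the vertex from which the walk entered `x`. -/
theorem AltReach.of_adj (hbip : IsBipartiteWith G side) (hM : IsMatchingIn G M)
    (hx : AltReach G M side (side x) x) (hxy : G.Adj x y) : AltReach G M side (side x) y := by
  by_cases hxyM : s(x, y) ∈ M
  · obtain ⟨u, hu, hsu, h⟩ := hx
    rcases h.cases_tail with rfl | ⟨z, hz, hzx, hzxM⟩
    · exact (hu ⟨_, hxyM, Sym2.mem_mk_left x y⟩).elim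
    · obtain rfl : z = y := by
        rw [← Sym2.congr_left (a := x), Sym2.eq_swap (a := y)]
        exact hM.eq_of_mem (hzxM.mpr (hbip z x hzx)) hxyM (Sym2.mem_mk_right z x)
          (Sym2.mem_mk_left x y)
      exact ⟨u, hu, hsu, hz⟩
  · exact hx.tail ⟨hxy, by simpa using hxyM⟩

theorem AltReach.of_mem (hM : IsMatchingIn G M) (hx : AltReach G M side (!side x) x)
    (hxy : s(x, y) ∈ M) : AltReach G M side (!side x) y :=
  hx.tail ⟨hM.1 hxy, by simpa using hxy⟩

theorem IsBipartiteWith.altStep_swap (hbip : IsBipartiteWith G side)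
    (h : AltStep G M side c x y) : AltStep G M side (!c) y x := by
  refine ⟨h.1.symm, ?_⟩
  rw [Sym2.eq_swap, h.2]
  have := hbip x y h.1
  revert this
  cases side x <;> cases side y <;> cases c <;> simp

end AltReach

/-- Switching the first two edges of the path keeps the size of the matching and shortens the
path by two. -/
theorem IsMatchingIn.exists_ncard_lt_of_isChain_altStep [Finite V] {G : SimpleGraph V}
    {side : V → Bool} {c : Bool} (hbip : IsBipartiteWith G side) :
    ∀ {M : Set (Sym2 V)} {u v : V} {t : List V}, IsMatchingIn G M → (u :: t).Nodup →
      (u :: t).IsChain (AltStep G M side c) → (u :: t).getLast? = some v → side u = c →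
      side v ≠ c → ¬ IsMatchedBy M u → ¬ IsMatchedBy M v →
      ∃ M' : Set (Sym2 V), IsMatchingIn G M' ∧ M.ncard < M'.ncard
  | _, u, v, [], _, _, _, hv, hu, hv', _, _ => by
    obtain rfl : u = v := by simpa using hv
    exact (hv' hu).elim
  | _, u, v, [x], hM, _, hch, hv, _, _, hum, hvm => by
    obtain rfl : x = v := by simpa using hv
    obtain ⟨hM', hcard⟩ := hM.insert_edge (List.isChain_pair.mp hch).1 hum hvm
    exact ⟨_, hM', by omega⟩
  | M, u, v, x :: y :: t, hM, hnd, hch, hv, hsu, hsv, hum, hvm => by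
    simp only [List.isChain_cons_cons] at hch
    obtain ⟨⟨hux, -⟩, ⟨hxy, hxyM⟩, hch⟩ := hch
    rw [List.nodup_cons, List.nodup_cons] at hnd
    obtain ⟨hu_xyt, hx_nmem, hnd⟩ := hnd
    have hu_nmem : u ∉ y :: t := fun h => hu_xyt (List.mem_cons_of_mem x h)
    rw [List.getLast?_cons_cons, List.getLast?_cons_cons] at hv
    have hv_mem : v ∈ y :: t := List.mem_of_getLast? hv
    have hsx : side x = !c := Bool.eq_not.mpr (hsu ▸ (hbip u x hux).symm)
    replace hxyM : s(x, y) ∈ M := hxyM.mpr (by simp [hsx])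
    obtain ⟨hM₁, hcard⟩ := hM.switch hux hum hxyM
    have hoff : ∀ w ∉ y :: t, ∀ w' a b, a ∈ y :: t → b ∈ y :: t → s(a, b) ≠ s(w, w') := by
      intro w hw w' a b ha hb h
      rcases Sym2.mem_iff.mp (h ▸ Sym2.mem_mk_left w w' : w ∈ s(a, b)) with rfl | rfl
      exacts [hw ha, hw hb]
    have hch₁ : (y :: t).IsChain (AltStep G (insert s(u, x) (M \ {s(x, y)})) side c) :=
      hch.imp_of_mem_imp fun a b ha hb hab => ⟨hab.1, by
        simp [hoff u hu_nmem x a b ha hb, hoff x hx_nmem y a b ha hb, hab.2]⟩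
    have hsy : side y = c := by
      rw [Bool.eq_not.mpr (hbip x y hxy).symm, hsx, Bool.not_not]
    have hym : ¬ IsMatchedBy (insert s(u, x) (M \ {s(x, y)})) y := fun h => by
      rcases hM.isMatchedBy_switch hxyM h with rfl | rfl | ⟨hyy, -⟩
      exacts [hu_nmem List.mem_cons_self, hx_nmem List.mem_cons_self, hyy rfl]
    have hvm₁ : ¬ IsMatchedBy (insert s(u, x) (M \ {s(x, y)})) v := fun h => by
      rcases hM.isMatchedBy_switch hxyM h with rfl | rfl | ⟨-, hv⟩
      exacts [hu_nmem hv_mem, hx_nmem hv_mem, hvm hv]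
    obtain ⟨M', hM', hlt⟩ :=
      hM₁.exists_ncard_lt_of_isChain_altStep hbip hnd hch₁ hv hsy hsv hym hvm₁
    exact ⟨M', hM', hcard ▸ hlt⟩

/-- König's vertex cover: the odd vertices and the unreachable vertices on side `true`. -/
def altCover (G : SimpleGraph V) (M : Set (Sym2 V)) (side : V → Bool) : Set V :=
  {v | AltReach G M side (!side v) v ∨ (side v = true ∧ ∀ c, ¬ AltReach G M side c v)}

section MaxMatching

variable {G H : SimpleGraph V} {M : Set (Sym2 V)} {side : V → Bool} {c : Bool} {v x y : V}

theorem IsMaxMatching.not_altReach_of_altReach [Finite V] (hbip : IsBipartiteWith G side)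
    (hM : IsMaxMatching G M) (h : AltReach G M side c v) : ¬ AltReach G M side (!c) v := by
  rintro ⟨u', hu', hc', h'⟩
  obtain ⟨u, hu, rfl, h⟩ := h
  have hpath : ReflTransGen (AltStep G M side (side u)) u u' :=
    h.trans (ReflTransGen.mono (fun _ _ hs => by simpa using hbip.altStep_swap hs) _ _ h'.swap)
  obtain ⟨l, hnd, hch, hlu, hlu'⟩ := List.exists_nodup_isChain_of_reflTransGen hpath
  obtain ⟨t, rfl⟩ := List.head?_eq_some_iff.mp hlu
  obtain ⟨M', hM', hlt⟩ := hM.1.exists_ncard_lt_of_isChain_altStep hbip hnd hch hlu' rfl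
    (by simp [hc']) hu hu'
  exact (hM.2 M' hM').not_gt hlt

theorem IsMaxMatching.isMatchedBy_of_altReach [Finite V] (hbip : IsBipartiteWith G side)
    (hM : IsMaxMatching G M) (h : AltReach G M side (!side v) v) : IsMatchedBy M v :=
  by_contra fun hv => hM.not_altReach_of_altReach hbip (altReach_self hv) h

theorem isVertexCover_altCover (hbip : IsBipartiteWith G side) (hM : IsMatchingIn G M) :
    G.IsVertexCover (altCover G M side) := by
  intro x y hxy
  have hsy : side y = !side x := Bool.eq_not.mpr (hbip x y hxy).symm
  by_cases hx : AltReach G M side (side x) x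
  · exact .inr (.inl (by simpa [hsy] using hx.of_adj hbip hM hxy))
  by_cases hy : AltReach G M side (side y) y
  · exact .inl (.inl (by simpa [hsy] using hy.of_adj hbip hM hxy.symm))
  by_cases hx' : AltReach G M side (!side x) x
  · exact .inl (.inl hx')
  by_cases hy' : AltReach G M side (!side y) y
  · exact .inr (.inl hy')
  have hunreach : ∀ w, ¬ AltReach G M side (side w) w → ¬ AltReach G M side (!side w) w →
      ∀ c, ¬ AltReach G M side c w := by
    intro w h h' c
    cases c <;> cases hw : side w <;> simp_all
  cases hsx : side x
  · exact .inr (.inr ⟨by simp [hsy, hsx], hunreach y hy hy'⟩)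
  · exact .inl (.inr ⟨hsx, hunreach x hx hx'⟩)

theorem IsMaxMatching.notMem_altCover [Finite V] (hbip : IsBipartiteWith G side)
    (hM : IsMaxMatching G M) (hxy : s(x, y) ∈ M) (hx : x ∈ altCover G M side) :
    y ∉ altCover G M side := by
  have hsy : side y = !side x := Bool.eq_not.mpr (hbip x y (hM.1.1 hxy)).symm
  rintro (hy | ⟨hsy', hy⟩)
  all_goals rcases hx with hx | ⟨hsx, hx⟩
  · exact hM.not_altReach_of_altReach hbip (by simpa [hsy] using hx.of_mem hM.1 hxy) hy
  · exact hx _ (hy.of_mem hM.1 (Sym2.eq_swap ▸ hxy))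
  · exact hy _ (hx.of_mem hM.1 hxy)
  · simp [hsy, hsx] at hsy'

theorem IsMaxMatching.ncard_altCover_le [Finite V] (hbip : IsBipartiteWith G side)
    (hM : IsMaxMatching G M) : (altCover G M side).ncard ≤ M.ncard := by
  refine Set.ncard_le_ncard_of_rel (Set.toFinite M) (fun v e => v ∈ e) ?_ ?_
  · rintro v (hv | ⟨-, hv⟩)
    · exact hM.isMatchedBy_of_altReach hbip hv
    · by_contra hm
      exact hv _ (altReach_self (by simpa [IsMatchedBy] using hm))
  · intro x hx y hy e he hxe hye
    by_contra hne
    obtain rfl := (Sym2.mem_and_mem_iff hne).mp ⟨hxe, hye⟩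
    exact hM.notMem_altCover hbip he hx hy

theorem IsMaxMatching.of_le [Finite V] (hbip : IsBipartiteWith G side) (hM : IsMaxMatching G M)
    (hGH : G ≤ H) (hC : H.IsVertexCover (altCover G M side)) : IsMaxMatching H M :=
  ⟨hM.1.mono hGH, fun _ hN => (hN.ncard_le_of_isVertexCover hC).trans (hM.ncard_altCover_le hbip)⟩

end MaxMatching

section AddVertex

variable {G H : SimpleGraph V} {M : Set (Sym2 V)} {side : V → Bool} {c : Bool} {v : V}

theorem AltReach.of_addVertex {a : V} (hbipH : IsBipartiteWith H side)
    (hHG : ∀ x y, H.Adj x y → G.Adj x y ∨ x = a ∨ y = a) (haG : ∀ w, ¬ G.Adj w a)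
    (haM : ¬ IsMatchedBy M a) (hodd : ∀ z, H.Adj a z → AltReach G M side (!side z) z)
    (hva : v ≠ a) (h : AltReach H M side c v) : AltReach G M side c v := by
  obtain ⟨u, hu, rfl, h⟩ := h
  have hnbr : ∀ z, H.Adj a z → AltReach G M side (side a) z := fun z hz => by
    simpa [Bool.eq_not.mpr (hbipH a z hz)] using hodd z hz
  suffices ∀ y, ReflTransGen (AltStep H M side (side u)) u y → AltReach G M side (side u) y ∨
      (y = a ∧ ∀ z, AltStep H M side (side u) a z → AltReach G M side (side u) z) from
    (this v h).resolve_right fun h => hva h.1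
  intro y hy
  induction hy with
  | refl =>
    by_cases hua : u = a
    · exact .inr ⟨hua, fun z hz => hua ▸ hnbr z (hua ▸ hz.1)⟩
    · exact .inl (altReach_self hu)
  | @tail x y _ hxy ih =>
    rcases ih with hx | ⟨rfl, hstep⟩
    · rcases hHG x y hxy.1 with hG | rfl | rfl
      · exact .inl (hx.tail ⟨hG, hxy.2⟩)
      · exact .inl (hx.eq_side_of_isolated haG ▸ hnbr y hxy.1)
      · refine .inr ⟨rfl, fun z hz => (hbipH x y hxy.1 ?_).elim⟩
        have hxa : s(x, y) ∉ M := fun h => haM ⟨_, h, Sym2.mem_mk_right x y⟩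
        have haz : s(y, z) ∉ M := fun h => haM ⟨_, h, Sym2.mem_mk_left y z⟩
        rw [hxy.2] at hxa
        rw [hz.2] at haz
        exact (not_not.mp hxa).trans (not_not.mp haz).symm
    · exact .inl (hstep y hxy)

end AddVertex

/-- Let `H` be obtained from the bipartite graph `G` by adding a new
vertex `a` on the applicant side (modelled as a vertex isolated in `G`) together
with edges from `a` to a set `N` of posts, and let `M` be a maximum matching of
`G`. If every vertex of `N` is odd with respect to `M` in `G`, then `M` is a
maximum matching of `H`, every vertex of `G` keeps its label (even, odd or
unreachable) in `H`, and `a` is even with respect to `M` in `H`. -/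
theorem add_vertex_all_odd [Fintype V]
    (G H : SimpleGraph V) (side : V → Bool) (hbip : IsBipartiteWith G side)
    (a : V) (ha : side a = false) (haG : ∀ v, ¬ G.Adj a v)
    (N : Set V) (hNside : ∀ p ∈ N, side p = true)
    (hH : ∀ u v, H.Adj u v ↔ G.Adj u v ∨ (u = a ∧ v ∈ N) ∨ (v = a ∧ u ∈ N))
    (M : Set (Sym2 V)) (hM : IsMaxMatching G M)
    (hodd : ∀ p ∈ N, OddVtx G M p) :
    IsMaxMatching H M ∧
    (∀ v, v ≠ a →
      (EvenVtx G M v ↔ EvenVtx H M v) ∧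
      (OddVtx G M v ↔ OddVtx H M v) ∧
      (UnreachableVtx G M v ↔ UnreachableVtx H M v)) ∧
    EvenVtx H M a := by
  have hGH : G ≤ H := fun u v h => (hH u v).mpr (.inl h)
  have hbipH : IsBipartiteWith H side := fun u v huv => by
    rcases (hH u v).mp huv with h | ⟨rfl, hv⟩ | ⟨rfl, hu⟩
    exacts [hbip u v h, by simp [ha, hNside v hv], by simp [ha, hNside u hu]]
  have haM : ¬ IsMatchedBy M a := fun ⟨e, he, hae⟩ => by
    obtain ⟨w, rfl⟩ := Sym2.mem_iff_exists.mp hae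
    exact haG w (hM.1.1 he)
  have hoddN : ∀ z ∈ N, AltReach G M side (!side z) z := fun z hz => hbip.oddVtx_iff.mp (hodd z hz)
  have hreach : ∀ v, v ≠ a → ∀ c, AltReach G M side c v ↔ AltReach H M side c v := by
    refine fun v hva c => ⟨AltReach.mono hGH, AltReach.of_addVertex hbipH ?_
      (fun w hw => haG w hw.symm) haM (fun z hz => hoddN z ?_) hva⟩
    · intro x y hxy
      rcases (hH x y).mp hxy with h | ⟨h, -⟩ | ⟨h, -⟩ <;> simp [h]
    · rcases (hH a z).mp hz with h | ⟨-, h⟩ | ⟨rfl, h⟩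
      exacts [(haG z h).elim, h, h]
  refine ⟨hM.of_le hbip hGH fun x y hxy => ?_, fun v hva => ?_,
    hbipH.evenVtx_iff.mpr (altReach_self haM)⟩
  · rcases (hH x y).mp hxy with h | ⟨rfl, hy⟩ | ⟨rfl, hx⟩
    exacts [isVertexCover_altCover hbip hM.1 h, .inr (.inl (hoddN y hy)),
      .inl (.inl (hoddN x hx))]
  · simp only [hbip.evenVtx_iff, hbipH.evenVtx_iff, hbip.oddVtx_iff, hbipH.oddVtx_iff,
      hbip.unreachableVtx_iff, hbipH.unreachableVtx_iff, hreach v hva, and_self]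
end

section
/- Let G = (A ∪ P, E) be a bipartite graph, M a maximum matching in G, and let H be obtained from G by adding a new vertex a to the A-side together with edges from a to a set N ⊆ P of neighbors. Suppose no vertex of N is even with respect to M in G, and some vertex p ∈ N is unreachable with respect to M in G. Then M is a maximum matching of H, the vertex p is odd with respect to M in H, and the M-partner M(p) of p is even with respect to M in H. -/
open SimpleGraph

variable {V : Type*}

/-!
If a matching `K` of `H` were larger than `M`, it would have to cover `a`, by an edge `s(a, n)`
with `n ∈ N`; removing that edge leaves a matching `K'` of `G` that misses `n` and is at least as
large as `M`. Follow the component of `M ∆ K'` from `n`: at each step the `M`-edge `s(n, w)` at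
the current vertex is exchanged into `K'` for the `K'`-edge `s(w, x)` at its other end, which
keeps `K'` a matching of the same size and strictly shrinks `M \ K'`. The walk ends either at a
vertex `w` free in `K'`, where adding `s(n, w)` gives a matching larger than `K'`, hence than `M`, or at an
`M`-free vertex, and reading the walk backwards gives an even alternating path to `n`, so `n`
would be even. Since `a` is `M`-free and adjacent to `p`, the paths `a p` and `a p M(p)` witness
the parities of `p` and `M(p)` in `H`.
-/

namespace IsMatchingIn

variable {G H : SimpleGraph V} {M K : Set (Sym2 V)}

theorem eq_of_mem_s16 (hM : IsMatchingIn G M) {e f : Sym2 V} (he : e ∈ M) (hf : f ∈ M) {v : V}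
    (hve : v ∈ e) (hvf : v ∈ f) : e = f :=
  by_contra fun hef => hM.2 e he f hf hef v hve hvf

theorem exists_eq_of_mem (hM : IsMatchingIn G M) {e : Sym2 V} (he : e ∈ M) {v : V}
    (hv : v ∈ e) : ∃ w, e = s(v, w) ∧ G.Adj v w := by
  obtain ⟨w, rfl⟩ := Sym2.mem_iff_exists.1 hv
  exact ⟨w, rfl, hM.1 he⟩

theorem mono_s16 (hM : IsMatchingIn G M) (hKM : K ⊆ M) : IsMatchingIn G K :=
  ⟨hKM.trans hM.1, fun e he f hf => hM.2 e (hKM he) f (hKM hf)⟩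

theorem of_le (hM : IsMatchingIn G M) (hGH : G ≤ H) : IsMatchingIn H M :=
  ⟨hM.1.trans (edgeSet_mono hGH), hM.2⟩

theorem insert (hK : IsMatchingIn G K) {v w : V} (hvw : G.Adj v w) (hv : ¬ IsMatchedBy K v)
    (hw : ¬ IsMatchedBy K w) : IsMatchingIn G (insert s(v, w) K) := by
  have hfresh : ∀ f ∈ K, ∀ u ∈ s(v, w), u ∉ f := by
    intro f hf u hu huf
    rcases Sym2.mem_iff.1 hu with rfl | rfl
    exacts [hv ⟨f, hf, huf⟩, hw ⟨f, hf, huf⟩]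
  refine ⟨Set.insert_subset hvw hK.1, ?_⟩
  rintro e (rfl | he) f (rfl | hf) hef u hue huf
  · exact hef rfl
  · exact hfresh f hf u hue huf
  · exact hfresh e he u huf hue
  · exact hK.2 e he f hf hef u hue huf

theorem notMem_of_mem_symmDiff (hM : IsMatchingIn G M) (hK : IsMatchingIn G K) {e f : Sym2 V}
    (heM : e ∈ M) (heK : e ∈ K) {v : V} (hv : v ∈ e) (hf : f ∈ symmDiff M K) : v ∉ f := by
  intro hvf
  rcases Set.mem_symmDiff.1 hf with ⟨hfM, hfK⟩ | ⟨hfK, hfM⟩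
  · exact hfK (hM.eq_of_mem_s16 heM hfM hv hvf ▸ heK)
  · exact hfM (hK.eq_of_mem_s16 heK hfK hv hvf ▸ heM)

end IsMatchingIn

theorem pathEdges_cons_cons_s16 (u v : V) (l : List V) :
    pathEdges (u :: v :: l) = s(u, v) :: pathEdges (v :: l) := rfl

theorem pathEdges_append_pair (l : List V) (u v : V) :
    pathEdges (l ++ [u, v]) = pathEdges (l ++ [u]) ++ [s(u, v)] := by
  induction l with
  | nil => rfl
  | cons w l ih =>
    cases l with
    | nil => rfl
    | cons x l => simpa only [List.cons_append, pathEdges_cons_cons_s16, List.cons.injEq, true_and]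

theorem pathEdges_reverse (l : List V) : pathEdges l.reverse = (pathEdges l).reverse := by
  induction l with
  | nil => rfl
  | cons u l ih =>
    cases l with
    | nil => rfl
    | cons v l =>
      rw [List.reverse_cons, List.reverse_cons, List.append_assoc, List.singleton_append,
        pathEdges_append_pair, ← List.reverse_cons, ih, pathEdges_cons_cons_s16, List.reverse_cons,
        Sym2.eq_swap]

theorem mem_pathEdges_of_mem {l : List V} {v : V} (hv : v ∈ l) :
    l.head? = some v ∨ ∃ e ∈ pathEdges l, v ∈ e := by
  induction l with
  | nil => cases hv
  | cons u l ih =>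
    rcases List.mem_cons.1 hv with rfl | hv
    · exact Or.inl rfl
    obtain ⟨w, l, rfl⟩ : ∃ w l', l = w :: l' := List.exists_cons_of_ne_nil (List.ne_nil_of_mem hv)
    right
    rcases ih hv with h | ⟨e, he, hve⟩
    · cases Option.some.inj h
      exact ⟨s(u, v), List.mem_cons_self, Sym2.mem_mk_right _ _⟩
    · exact ⟨e, List.mem_cons_of_mem _ he, hve⟩

namespace IsAltPath

variable {G : SimpleGraph V} {M : Set (Sym2 V)}

theorem exists_eq_cons {u v : V} {l : List V} (hl : IsAltPath G M u v l) :
    ∃ l', l = u :: l' := by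
  obtain ⟨-, -, -, hhead, -⟩ := hl
  cases l with
  | nil => cases hhead
  | cons w l => exact ⟨l, by rw [Option.some.inj hhead]⟩

theorem notMem {u v y : V} {l : List V} (hl : IsAltPath G M u v l) (hyu : y ≠ u)
    (hy : ∀ e ∈ pathEdges l, y ∉ e) : y ∉ l := by
  intro hyl
  rcases mem_pathEdges_of_mem hyl with h | ⟨e, he, hye⟩
  · exact hyu (Option.some.inj (h.symm.trans hl.2.2.2.1))
  · exact hy e he hye

theorem singleton (v : V) : IsAltPath G M v v [v] :=
  ⟨List.isChain_singleton v, List.nodup_singleton v, List.isChain_nil, rfl, rfl⟩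

theorem reverse {u v : V} {l : List V} (hl : IsAltPath G M u v l) :
    IsAltPath G M v u l.reverse := by
  obtain ⟨hadj, hnodup, halt, hhead, hlast⟩ := hl
  refine ⟨List.isChain_reverse.2 (hadj.imp fun _ _ h => h.symm), List.nodup_reverse.2 hnodup,
    ?_, by rwa [List.head?_reverse], by rwa [List.getLast?_reverse]⟩
  rw [pathEdges_reverse]
  exact List.isChain_reverse.2 (halt.imp fun _ _ h => by tauto)

theorem cons_cons {n w x u : V} {l : List V} (hl : IsAltPath G M x u l)
    (hfirst : ∀ e ∈ (pathEdges l).head?, e ∈ M) (hnw : G.Adj n w) (hwx : G.Adj w x)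
    (hnwM : s(n, w) ∈ M) (hwxM : s(w, x) ∉ M) (hn : n ∉ l) (hw : w ∉ l) :
    IsAltPath G M n u (n :: w :: l) := by
  obtain ⟨l, rfl⟩ := hl.exists_eq_cons
  obtain ⟨hadj, hnodup, halt, -, hlast⟩ := hl
  refine ⟨?_, ?_, ?_, rfl, by simpa using hlast⟩
  · exact List.isChain_cons_cons.2 ⟨hnw, List.isChain_cons_cons.2 ⟨hwx, hadj⟩⟩
  · simp_all [hnw.ne]
  · rw [pathEdges_cons_cons_s16, pathEdges_cons_cons_s16]
    refine List.isChain_cons_cons.2 ⟨by simp [hnwM, hwxM], ?_⟩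
    cases hpe : pathEdges (x :: l) with
    | nil => exact List.isChain_singleton _
    | cons e es =>
      rw [hpe] at halt hfirst
      have heM : e ∈ M := hfirst e rfl
      exact List.isChain_cons_cons.2 ⟨by simp [hwxM, heM], halt⟩

end IsAltPath

section Exchange

variable {G : SimpleGraph V} {M K : Set (Sym2 V)} {n w x : V}

theorem isMatchingIn_exchange (hK : IsMatchingIn G K) (hnw : G.Adj n w) (hn : ¬ IsMatchedBy K n)
    (hwx : s(w, x) ∈ K) : IsMatchingIn G (insert s(n, w) (K \ {s(w, x)})) := by
  refine (hK.mono_s16 Set.sdiff_subset).insert hnw (fun ⟨g, hg, hng⟩ => hn ⟨g, hg.1, hng⟩) ?_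
  rintro ⟨g, ⟨hg, hgwx⟩, hwg⟩
  exact hgwx (hK.eq_of_mem_s16 hg hwx hwg (Sym2.mem_mk_left _ _))

theorem ncard_exchange [Finite V] (hn : ¬ IsMatchedBy K n) (hwx : s(w, x) ∈ K) :
    (insert s(n, w) (K \ {s(w, x)})).ncard = K.ncard := by
  rw [Set.ncard_insert_of_notMem fun h => hn ⟨_, h.1, Sym2.mem_mk_left _ _⟩,
    Set.ncard_sdiff_singleton_add_one hwx]

theorem not_isMatchedBy_exchange (hK : IsMatchingIn G K) (hn : ¬ IsMatchedBy K n)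
    (hwx : s(w, x) ∈ K) : ¬ IsMatchedBy (insert s(n, w) (K \ {s(w, x)})) x := by
  rintro ⟨g, rfl | ⟨hg, hgwx⟩, hxg⟩
  · rcases Sym2.mem_iff.1 hxg with rfl | rfl
    exacts [hn ⟨_, hwx, Sym2.mem_mk_right _ _⟩, (hK.1 hwx).ne rfl]
  · exact hgwx (hK.eq_of_mem_s16 hg hwx hxg (Sym2.mem_mk_right _ _))

theorem mem_exchange_iff {g : Sym2 V} (hwg : w ∉ g) :
    g ∈ insert s(n, w) (K \ {s(w, x)}) ↔ g ∈ K := by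
  simp only [Set.mem_insert_iff, Set.mem_sdiff, Set.mem_singleton_iff]
  constructor
  · rintro (rfl | ⟨hg, -⟩)
    exacts [absurd (Sym2.mem_mk_right _ _) hwg, hg]
  · exact fun hg => Or.inr ⟨hg, by rintro rfl; exact hwg (Sym2.mem_mk_left _ _)⟩

theorem ncard_sdiff_exchange_lt [Finite V] (hnwM : s(n, w) ∈ M) (hnwK : s(n, w) ∉ K)
    (hwxM : s(w, x) ∉ M) : (M \ insert s(n, w) (K \ {s(w, x)})).ncard < (M \ K).ncard := by
  refine Set.ncard_lt_ncard ⟨fun g ⟨hgM, hgK'⟩ => ⟨hgM, fun hgK => hgK' ?_⟩, fun hsub => ?_⟩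
  · exact Or.inr ⟨hgK, by rintro rfl; exact hwxM hgM⟩
  · exact (hsub ⟨hnwM, hnwK⟩).2 (Set.mem_insert _ _)

end Exchange

section Augment

variable {G : SimpleGraph V} {M : Set (Sym2 V)}

theorem exists_ncard_lt_or_exists_altPath_symmDiff [Finite V] (hM : IsMatchingIn G M)
    {K : Set (Sym2 V)} (hK : IsMatchingIn G K) {n : V} (hn : ¬ IsMatchedBy K n) :
    (∃ J, IsMatchingIn G J ∧ K.ncard < J.ncard) ∨
      ∃ u l, ¬ IsMatchedBy M u ∧ IsAltPath G M n u l ∧ Even (pathEdges l).length ∧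
        (∀ e ∈ (pathEdges l).head?, e ∈ M) ∧ ∀ e ∈ pathEdges l, e ∈ symmDiff M K := by
  by_cases hnM : IsMatchedBy M n
  swap
  · exact Or.inr ⟨n, [n], hnM, .singleton n, by simp [pathEdges], by simp [pathEdges],
      by simp [pathEdges]⟩
  obtain ⟨e, he, hne⟩ := hnM
  obtain ⟨w, rfl, hnw⟩ := hM.exists_eq_of_mem he hne
  have hnwK : s(n, w) ∉ K := fun h => hn ⟨_, h, Sym2.mem_mk_left _ _⟩
  by_cases hwK : IsMatchedBy K w
  swap
  · exact Or.inl ⟨_, hK.insert hnw hn hwK, by rw [Set.ncard_insert_of_notMem hnwK]; omega⟩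
  obtain ⟨f, hf, hwf⟩ := hwK
  obtain ⟨x, rfl, hwx⟩ := hK.exists_eq_of_mem hf hwf
  have hxn : x ≠ n := by rintro rfl; exact hn ⟨_, hf, Sym2.mem_mk_right _ _⟩
  have hwxM : s(w, x) ∉ M := fun h => hxn <| by
    simpa [hnw.ne'] using hM.eq_of_mem_s16 h he (Sym2.mem_mk_left _ _) (Sym2.mem_mk_right _ _)
  have hK' := isMatchingIn_exchange hK hnw hn hf
  have hdecr := ncard_sdiff_exchange_lt he hnwK hwxM
  rcases exists_ncard_lt_or_exists_altPath_symmDiff hM hK' (not_isMatchedBy_exchange hK hn hf)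
    with ⟨J, hJ, hJc⟩ | ⟨u, l, hu, hl, hleven, hlfirst, hlsd⟩
  · exact Or.inl ⟨J, hJ, ncard_exchange hn hf ▸ hJc⟩
  -- `n` and `w` lie only on `s(n, w)`, an edge of both matchings, so no edge of the symmetric
  -- difference meets them.
  have hnw_off : ∀ g ∈ pathEdges l, n ∉ g ∧ w ∉ g := fun g hg =>
    ⟨hM.notMem_of_mem_symmDiff hK' he (Set.mem_insert _ _) (Sym2.mem_mk_left _ _) (hlsd g hg),
      hM.notMem_of_mem_symmDiff hK' he (Set.mem_insert _ _) (Sym2.mem_mk_right _ _) (hlsd g hg)⟩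
  refine Or.inr ⟨u, n :: w :: l, hu,
    hl.cons_cons hlfirst hnw hwx he hwxM (hl.notMem hxn.symm fun g hg => (hnw_off g hg).1)
      (hl.notMem hwx.ne fun g hg => (hnw_off g hg).2), ?_, by simp [pathEdges_cons_cons_s16, he], ?_⟩
  · obtain ⟨l, rfl⟩ := hl.exists_eq_cons
    simpa [pathEdges_cons_cons_s16, parity_simps] using hleven
  · obtain ⟨l, rfl⟩ := hl.exists_eq_cons
    simp only [pathEdges_cons_cons_s16, List.mem_cons]
    rintro g (rfl | rfl | hg)
    · exact Or.inl ⟨he, hnwK⟩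
    · exact Or.inr ⟨hf, hwxM⟩
    · simpa only [Set.mem_symmDiff, mem_exchange_iff (hnw_off g hg).2] using hlsd g hg
termination_by (M \ K).ncard

theorem IsMaxMatching.ncard_lt [Finite V] (hM : IsMaxMatching G M) {n : V}
    (hn : ¬ EvenVtx G M n) {K : Set (Sym2 V)} (hK : IsMatchingIn G K)
    (hnK : ¬ IsMatchedBy K n) : K.ncard < M.ncard := by
  rcases exists_ncard_lt_or_exists_altPath_symmDiff hM.1 hK hnK with ⟨J, hJ, hKJ⟩ |
    ⟨u, l, hu, hl, hleven, -⟩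
  · exact hKJ.trans_le (hM.2 J hJ)
  · exact absurd ⟨u, l.reverse, hu, hl.reverse, by rwa [pathEdges_reverse, List.length_reverse]⟩ hn

theorem IsMaxMatching.addVertex [Finite V] {H : SimpleGraph V} {a : V} {N : Set V}
    (haG : ∀ v, ¬ G.Adj a v)
    (hH : ∀ u v, H.Adj u v ↔ G.Adj u v ∨ (u = a ∧ v ∈ N) ∨ (v = a ∧ u ∈ N))
    (hM : IsMaxMatching G M) (hN : ∀ p ∈ N, ¬ EvenVtx G M p) : IsMaxMatching H M := by
  refine ⟨hM.1.of_le fun u v h => (hH u v).2 (Or.inl h), fun K hK => ?_⟩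
  have hKG : ∀ g ∈ K, a ∉ g → g ∈ G.edgeSet := by
    intro g hg hag
    induction g using Sym2.ind with
    | _ x y =>
      rcases (hH x y).1 (hK.1 hg) with h | ⟨rfl, -⟩ | ⟨rfl, -⟩
      exacts [h, absurd (Sym2.mem_mk_left _ _) hag, absurd (Sym2.mem_mk_right _ _) hag]
  by_cases ha : IsMatchedBy K a
  swap
  · exact hM.2 K ⟨fun g hg => hKG g hg fun hag => ha ⟨g, hg, hag⟩, hK.2⟩
  obtain ⟨e, he, hae⟩ := ha
  obtain ⟨n, rfl, han⟩ := hK.exists_eq_of_mem he hae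
  have hnN : n ∈ N := by
    rcases (hH a n).1 han with h | ⟨-, h⟩ | ⟨rfl, -⟩
    exacts [absurd h (haG n), h, absurd rfl han.ne]
  have hK' : IsMatchingIn G (K \ {s(a, n)}) :=
    ⟨fun g ⟨hg, hne⟩ => hKG g hg fun hag => hne (hK.eq_of_mem_s16 hg he hag (Sym2.mem_mk_left _ _)),
      (hK.mono_s16 Set.sdiff_subset).2⟩
  have hnK' : ¬ IsMatchedBy (K \ {s(a, n)}) n := fun ⟨g, ⟨hg, hne⟩, hng⟩ =>
    hne (hK.eq_of_mem_s16 hg he hng (Sym2.mem_mk_right _ _))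
  have hlt := hM.ncard_lt (hN n hnN) hK' hnK'
  have hcard := Set.ncard_sdiff_singleton_add_one he
  omega

end Augment

theorem add_vertex_unreachable_becomes_odd_general [Fintype V]
    (G H : SimpleGraph V)
    (a : V) (haG : ∀ v, ¬ G.Adj a v)
    (N : Set V)
    (hH : ∀ u v, H.Adj u v ↔ G.Adj u v ∨ (u = a ∧ v ∈ N) ∨ (v = a ∧ u ∈ N))
    (M : Set (Sym2 V)) (hM : IsMaxMatching G M)
    (hnoeven : ∀ p ∈ N, ¬ EvenVtx G M p)
    (p : V) (hpN : p ∈ N)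
    (q : V) (hq : s(p, q) ∈ M) :
    IsMaxMatching H M ∧ OddVtx H M p ∧ EvenVtx H M q := by
  have haM : ¬ IsMatchedBy M a := fun ⟨e, he, hae⟩ => by
    obtain ⟨v, rfl, hav⟩ := hM.1.exists_eq_of_mem he hae
    exact haG v hav
  have hap : a ≠ p := by rintro rfl; exact haM ⟨_, hq, Sym2.mem_mk_left _ _⟩
  have haq : a ≠ q := by rintro rfl; exact haM ⟨_, hq, Sym2.mem_mk_right _ _⟩
  have hapM : s(a, p) ∉ M := fun h => haM ⟨_, h, Sym2.mem_mk_left _ _⟩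
  have hHap : H.Adj a p := (hH a p).2 (Or.inr (Or.inl ⟨rfl, hpN⟩))
  have hHpq : H.Adj p q := (hH p q).2 (Or.inl (hM.1.1 hq))
  refine ⟨hM.addVertex haG hH hnoeven, ⟨a, [a, p], haM, ?_, by simp [pathEdges]⟩,
    ⟨a, [a, p, q], haM, ?_, by simp [pathEdges]⟩⟩
  · exact ⟨List.isChain_pair.2 hHap, by simp [hap], List.isChain_singleton _, rfl, rfl⟩
  · exact ⟨List.isChain_cons_cons.2 ⟨hHap, List.isChain_pair.2 hHpq⟩, by simp [hap, haq, hHpq.ne],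
      List.isChain_pair.2 (by simp [hapM, hq]), rfl, rfl⟩

/-- Let `H` be obtained from the bipartite graph `G` by adding a new
vertex `a` on the applicant side (modelled as a vertex isolated in `G`) together
with edges from `a` to a set `N` of posts, and let `M` be a maximum matching of
`G`. Suppose no vertex of `N` is even with respect to `M` in `G` and some
`p ∈ N` is unreachable with respect to `M` in `G`, with `M`-partner `q`. Then
`M` is a maximum matching of `H`, `p` is odd with respect to `M` in `H`, and `q`
is even with respect to `M` in `H`. -/
theorem add_vertex_unreachable_becomes_odd [Fintype V]
    (G H : SimpleGraph V) (side : V → Bool) (hbip : IsBipartiteWith G side)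
    (a : V) (ha : side a = false) (haG : ∀ v, ¬ G.Adj a v)
    (N : Set V) (hNside : ∀ p ∈ N, side p = true)
    (hH : ∀ u v, H.Adj u v ↔ G.Adj u v ∨ (u = a ∧ v ∈ N) ∨ (v = a ∧ u ∈ N))
    (M : Set (Sym2 V)) (hM : IsMaxMatching G M)
    (hnoeven : ∀ p ∈ N, ¬ EvenVtx G M p)
    (p : V) (hpN : p ∈ N) (hp : UnreachableVtx G M p)
    (q : V) (hq : s(p, q) ∈ M) :
    IsMaxMatching H M ∧ OddVtx H M p ∧ EvenVtx H M q :=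
  add_vertex_unreachable_becomes_odd_general G H a haG N hH M hM hnoeven p hpN q hq
end
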